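/- With W⁽¹⁾(ρ₁,ρ₂) = -(1/(2π)) cot(π(ρ₁+ρ₂)) sin²(πρ₂) - ρ₂/4 + (1/(4π)) sin(2πρ₂) and W⁽²⁾(ρ₁,ρ₂) = W⁽¹⁾(ρ₂,ρ₁), the determinant of the Jacobian matrix H_W(ρ) equals (1/(64 sin³(π(ρ₁+ρ₂)))) · {5 sin(π(ρ₁+ρ₂)) + sin(3π(ρ₁+ρ₂)) - 2 sin(π(3ρ₁+ρ₂)) - 2 sin(π(ρ₁+3ρ₂))} for all ρ in the open triangle T. -/

import Mathlib

/-!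
Write `x = π ρ₁`, `y = π ρ₂`, `u = sin y / sin (x + y)` and `v = sin x / sin (x + y)`; by the law
of sines `u`, `v`, `1` are the sides of a triangle with angles `x`, `y`, `π - (x + y)`. The
partial derivatives of `W` are `u² / 2`, `v² / 2`, `1/4 - u cos x + u² / 2` and
`1/4 - v cos y + v² / 2`, and the projection formula `u cos x + v cos y = 1`, the law of cosines
`u² + v² + 2 u v cos (x + y) = 1` and `v cos x + u cos y = cos (x - y)` reduce the determinant to
`(2 u² + 2 v² - 1) / 16`. Sum-to-product formulas turn the bracket on the right into
`4 sin (x + y) (2 sin² x + 2 sin² y - sin² (x + y))`.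
-/

open Real

/-- First component of the vector field `W`. -/
noncomputable def W1 (ρ₁ ρ₂ : ℝ) : ℝ :=
  -(1 / (2 * π)) * Real.cot (π * (ρ₁ + ρ₂)) * (Real.sin (π * ρ₂)) ^ 2
    - ρ₂ / 4 + (1 / (4 * π)) * Real.sin (2 * π * ρ₂)

/-- Second component of the vector field `W`. -/
noncomputable def W2 (ρ₁ ρ₂ : ℝ) : ℝ := W1 ρ₂ ρ₁

namespace Real

theorem hasDerivAt_cot {x : ℝ} (hx : sin x ≠ 0) : HasDerivAt cot (-1 / sin x ^ 2) x := by
  rw [show cot = fun t => cos t / sin t from funext cot_eq_cos_div_sin]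
  refine ((hasDerivAt_cos x).div (hasDerivAt_sin x) hx).congr_deriv ?_
  field_simp
  linear_combination -sin_sq_add_cos_sq x

theorem sin_add_sq (x y : ℝ) :
    sin (x + y) ^ 2 = sin x ^ 2 + sin y ^ 2 + 2 * sin x * sin y * cos (x + y) := by
  rw [sin_add, cos_add]
  linear_combination sin x ^ 2 * sin_sq_add_cos_sq y + sin y ^ 2 * sin_sq_add_cos_sq x

theorem sin_add_mul_cos_sub (x y : ℝ) :
    sin (x + y) * cos (x - y) = sin x * cos x + sin y * cos y := by
  rw [sin_add, cos_sub]
  linear_combination sin x * cos x * sin_sq_add_cos_sq y + sin y * cos y * sin_sq_add_cos_sq x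

theorem cos_add_mul_cos_sub (x y : ℝ) :
    cos (x + y) * cos (x - y) = 1 - sin x ^ 2 - sin y ^ 2 := by
  rw [cos_add, cos_sub]
  linear_combination cos y ^ 2 * sin_sq_add_cos_sq x + (1 - sin x ^ 2) * sin_sq_add_cos_sq y

theorem five_sin_add_sin_three_mul_sub (x y : ℝ) :
    5 * sin (x + y) + sin (3 * (x + y)) - 2 * sin (3 * x + y) - 2 * sin (x + 3 * y)
      = 4 * sin (x + y) * (2 * sin x ^ 2 + 2 * sin y ^ 2 - sin (x + y) ^ 2) := by
  have hsum :
      sin (3 * x + y) + sin (x + 3 * y) = 4 * sin (x + y) * (cos (x + y) * cos (x - y)) := by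
    rw [show 3 * x + y = 2 * (x + y) + (x - y) by ring,
      show x + 3 * y = 2 * (x + y) - (x - y) by ring, sin_add (2 * (x + y)), sin_sub (2 * (x + y)),
      sin_two_mul]
    ring
  rw [sin_three_mul]
  linear_combination (-2) * hsum + (-8 * sin (x + y)) * cos_add_mul_cos_sub x y

end Real

theorem det_partials_eq {x y : ℝ} (hs : sin (x + y) ≠ 0) :
    (sin y / sin (x + y)) ^ 2 / 2 * ((sin x / sin (x + y)) ^ 2 / 2)
      - (1 / 4 - sin y / sin (x + y) * cos x + (sin y / sin (x + y)) ^ 2 / 2)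
        * (1 / 4 - sin x / sin (x + y) * cos y + (sin x / sin (x + y)) ^ 2 / 2)
      = (2 * (sin x / sin (x + y)) ^ 2 + 2 * (sin y / sin (x + y)) ^ 2 - 1) / 16 := by
  set u := sin y / sin (x + y)
  set v := sin x / sin (x + y)
  have hA : u * cos x + v * cos y = 1 := by
    simp only [u, v]; field_simp; rw [sin_add]; ring
  have hB : v * cos x + u * cos y = cos (x - y) := by
    simp only [u, v]; field_simp; linear_combination -(sin_add_mul_cos_sub x y)
  have hC : u ^ 2 + v ^ 2 + 2 * u * v * cos (x + y) = 1 := by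
    simp only [u, v]; field_simp; linear_combination -(sin_add_sq x y)
  linear_combination (1 / 4) * hA - (1 / 4) * hC + (u * v / 2) * hB
    + (u * v / 2) * cos_add x y + (u * v / 2) * cos_sub x y

section partialDerivatives

variable {a b : ℝ}

theorem hasDerivAt_W1_fst (hs : sin (π * (a + b)) ≠ 0) :
    HasDerivAt (fun a => W1 a b) ((sin (π * b) / sin (π * (a + b))) ^ 2 / 2) a := by
  have hlin : HasDerivAt (fun a => π * (a + b)) π a := by
    simpa using ((hasDerivAt_id a).add_const b).const_mul π
  have hcot := (hasDerivAt_cot hs).comp a hlin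
  have := (((hcot.const_mul (-(1 / (2 * π)))).mul_const (sin (π * b) ^ 2)).sub_const
    (b / 4)).add_const (1 / (4 * π) * sin (2 * π * b))
  refine this.congr_deriv ?_
  field_simp

theorem hasDerivAt_W1_snd (hs : sin (π * (a + b)) ≠ 0) :
    HasDerivAt (fun b => W1 a b)
      (1 / 4 - sin (π * b) / sin (π * (a + b)) * cos (π * a)
        + (sin (π * b) / sin (π * (a + b))) ^ 2 / 2) b := by
  have hlin : HasDerivAt (fun b => π * (a + b)) π b := by
    simpa using ((hasDerivAt_id b).const_add a).const_mul π
  have hcot := (hasDerivAt_cot hs).comp b hlin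
  have hsin := ((hasDerivAt_sin (π * b)).comp b ((hasDerivAt_id' b).const_mul π)).fun_pow 2
  have hsin2 := (hasDerivAt_sin (2 * π * b)).comp b ((hasDerivAt_id' b).const_mul (2 * π))
  have := (((hcot.const_mul (-(1 / (2 * π)))).fun_mul hsin).fun_sub
    ((hasDerivAt_id' b).div_const 4)).fun_add (hsin2.const_mul (1 / (4 * π)))
  refine this.congr_deriv ?_
  have hcos : cos (π * a) = cos (π * (a + b)) * cos (π * b) + sin (π * (a + b)) * sin (π * b) := by
    rw [← cos_sub]; ring_nf
  simp only [Function.comp_apply, cot_eq_cos_div_sin]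
  rw [hcos, mul_assoc 2 π b, cos_two_mul]
  field_simp
  linear_combination 8 * sin (π * (a + b)) ^ 2 * sin_sq_add_cos_sq (π * b)

theorem hasDerivAt_W2_fst (hs : sin (π * (a + b)) ≠ 0) :
    HasDerivAt (fun a => W2 a b)
      (1 / 4 - sin (π * a) / sin (π * (a + b)) * cos (π * b)
        + (sin (π * a) / sin (π * (a + b))) ^ 2 / 2) a := by
  have h := hasDerivAt_W1_snd (a := b) (b := a) (by rwa [add_comm])
  rw [add_comm b a] at h
  exact h

theorem hasDerivAt_W2_snd (hs : sin (π * (a + b)) ≠ 0) :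
    HasDerivAt (fun b => W2 a b) ((sin (π * a) / sin (π * (a + b))) ^ 2 / 2) b := by
  have h := hasDerivAt_W1_fst (a := b) (b := a) (by rwa [add_comm])
  rw [add_comm b a] at h
  exact h

end partialDerivatives

/-- The determinant of the Jacobian matrix `H_W(ρ)`. -/
theorem det_HW (ρ₁ ρ₂ : ℝ) (h1 : 0 < ρ₁) (h2 : 0 < ρ₂) (h12 : ρ₁ + ρ₂ < 1) :
    deriv (fun a => W1 a ρ₂) ρ₁ * deriv (fun b => W2 ρ₁ b) ρ₂
      - deriv (fun b => W1 ρ₁ b) ρ₂ * deriv (fun a => W2 a ρ₂) ρ₁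
      = (1 / (64 * (Real.sin (π * (ρ₁ + ρ₂))) ^ 3))
          * (5 * Real.sin (π * (ρ₁ + ρ₂)) + Real.sin (3 * π * (ρ₁ + ρ₂))
            - 2 * Real.sin (π * (3 * ρ₁ + ρ₂)) - 2 * Real.sin (π * (ρ₁ + 3 * ρ₂))) := by
  have hs : sin (π * (ρ₁ + ρ₂)) ≠ 0 :=
    (sin_pos_of_pos_of_lt_pi (mul_pos pi_pos (by linarith)) (mul_lt_of_lt_one_right pi_pos h12)).ne'
  rw [(hasDerivAt_W1_fst hs).deriv, (hasDerivAt_W2_snd hs).deriv, (hasDerivAt_W1_snd hs).deriv,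
    (hasDerivAt_W2_fst hs).deriv]
  rw [mul_add] at hs ⊢
  rw [det_partials_eq hs, show 3 * π * (ρ₁ + ρ₂) = 3 * (π * ρ₁ + π * ρ₂) by ring,
    show π * (3 * ρ₁ + ρ₂) = 3 * (π * ρ₁) + π * ρ₂ by ring,
    show π * (ρ₁ + 3 * ρ₂) = π * ρ₁ + 3 * (π * ρ₂) by ring, five_sin_add_sin_three_mul_sub]
  generalize sin (π * ρ₁ + π * ρ₂) = S at hs ⊢
  field_simp
  ring
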